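/- Fix an integer k ≥ 2 and p ∈ (0, 1/2]. The output distribution of the per-coordinate planting process with parameters k and p is exchangeable: for every permutation π of {1,…,k} and every x ∈ {0,1}^k, the probability of the output being x equals the probability of the output being (x_{π(1)},…,x_{π(k)}), despite the process only ever modifying the last bit. -/

import Mathlib

open Finset

/-- The weight of a `p`-biased bit: `1` has probability `p`, `0` has probability `1 - p`. -/
noncomputable def bern (p : ℝ) (b : Bool) : ℝ := if b then p else 1 - p

/-- The number of ones in a bit string. -/
def ones {k : ℕ} (x : Fin k → Bool) : ℕ := (Finset.univ.filter fun i => x i = true).card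

/-- Flipping the last bit of a bit string. -/
def flipLast {k : ℕ} (x : Fin k → Bool) : Fin k → Bool :=
  fun i => if (i : ℕ) = k - 1 then !(x i) else x i

/-- The transition kernel of the per-coordinate planting process: given the sampled string
`x` with `m` ones, if `k - m` is even the last bit is flipped with probability
`(p/(1-p))^(k-m)`; otherwise `x` is kept. `plantTrans k p x y` is the probability of
outputting `y` given that `x` was sampled. -/
noncomputable def plantTrans (k : ℕ) (p : ℝ) (x y : Fin k → Bool) : ℝ :=
  if Even (k - ones x) then
    (if y = flipLast x then (p / (1 - p)) ^ (k - ones x) else 0) +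
      (if y = x then 1 - (p / (1 - p)) ^ (k - ones x) else 0)
  else if y = x then 1 else 0

/-- The output distribution of the per-coordinate planting process with parameters `k`, `p`:
first sample `k` i.i.d. `p`-biased bits, then apply the flipping step. -/
noncomputable def plantPMF (k : ℕ) (p : ℝ) (y : Fin k → Bool) : ℝ :=
  ∑ x : Fin k → Bool, (∏ i : Fin k, bern p (x i)) * plantTrans k p x y

/-! An output `y` arises only from the sample `y` itself (not flipped) or from `flipLast y`
(flipped). The flip probability `(p/(1-p))^(k-m)` turns the sample weight `p^m (1-p)^(k-m)`
into exactly `p^k`, and flipping the last bit changes the parity of `k - m`. Hence `y`, with `m`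
ones, has probability `p^m (1-p)^(k-m) - (-1)^(k-m) p^k`, which depends on `y` only through `m`. -/

theorem flipLast_involutive {k : ℕ} : Function.Involutive (flipLast (k := k)) := by
  intro x; funext i; unfold flipLast; split_ifs <;> simp

theorem flipLast_ne_self {k : ℕ} (hk : 0 < k) (x : Fin k → Bool) : flipLast x ≠ x :=
  fun h => by
    simpa [flipLast] using congrFun h ⟨k - 1, by omega⟩

theorem ones_le {k : ℕ} (x : Fin k → Bool) : ones x ≤ k := by
  simpa [ones] using card_filter_le univ fun i => x i = true

theorem ones_comp_perm {k : ℕ} (π : Equiv.Perm (Fin k)) (x : Fin k → Bool) :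
    ones (fun i => x (π i)) = ones x := by
  simp only [ones, card_filter]
  exact Equiv.sum_comp π fun i => if x i = true then 1 else 0

theorem odd_ones_flipLast_add_ones {k : ℕ} (hk : 0 < k) (x : Fin k → Bool) :
    Odd (ones (flipLast x) + ones x) := by
  set last : Fin k := ⟨k - 1, by omega⟩
  simp only [ones, card_filter, ← sum_add_distrib]
  rw [Fintype.sum_eq_add_sum_compl last]
  have hlast :
      (if flipLast x last = true then 1 else 0) + (if x last = true then 1 else 0) = 1 := by
    cases h : x last <;> simp [flipLast, last, h]
  have hrest : ∀ i ∈ ({last}ᶜ : Finset (Fin k)),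
      (if flipLast x i = true then 1 else 0) + (if x i = true then 1 else 0) =
        2 * (if x i = true then 1 else 0) := by
    intro i hi
    have : (i : ℕ) ≠ k - 1 := fun h => by simp [Fin.ext_iff, last, h] at hi
    simp only [flipLast, this, if_false]
    ring
  rw [hlast, sum_congr rfl hrest, ← mul_sum, add_comm]
  exact odd_two_mul_add_one _

theorem even_sub_ones_flipLast_iff {k : ℕ} (hk : 0 < k) (x : Fin k → Bool) :
    Even (k - ones (flipLast x)) ↔ ¬Even (k - ones x) := by
  have := Nat.odd_add.mp (odd_ones_flipLast_add_ones hk x)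
  rw [Nat.even_sub (ones_le _), Nat.even_sub (ones_le _),
    ← Nat.not_odd_iff_even (n := ones (flipLast x)), this]
  tauto

theorem prod_bern (p : ℝ) {k : ℕ} (x : Fin k → Bool) :
    ∏ i, bern p (x i) = p ^ ones x * (1 - p) ^ (k - ones x) := by
  have hzeros : #{i | ¬x i = true} = k - ones x := by
    have := card_filter_add_card_filter_not (s := univ) fun i => x i = true
    rw [card_univ, Fintype.card_fin] at this
    rw [ones]
    omega
  simp only [bern]
  rw [prod_ite, prod_const, prod_const, hzeros, ones]

theorem pow_mul_one_sub_pow_mul_div_pow {p : ℝ} (hp : p ≠ 1) {m k : ℕ} (hm : m ≤ k) :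
    p ^ m * (1 - p) ^ (k - m) * (p / (1 - p)) ^ (k - m) = p ^ k := by
  have : (1 - p) ^ (k - m) ≠ 0 := pow_ne_zero _ (sub_ne_zero.mpr hp.symm)
  rw [div_pow, mul_assoc, mul_div_cancel₀ _ this, ← pow_add, Nat.add_sub_cancel' hm]

section plantTrans

variable {k : ℕ} (p : ℝ)

theorem plantTrans_eq_zero {x y : Fin k → Bool} (hx : y ≠ x) (hfx : y ≠ flipLast x) :
    plantTrans k p x y = 0 := by
  simp [plantTrans, hx, hfx]

theorem plantTrans_self (hk : 0 < k) (x : Fin k → Bool) :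
    plantTrans k p x x = if Even (k - ones x) then 1 - (p / (1 - p)) ^ (k - ones x) else 1 := by
  simp [plantTrans, (flipLast_ne_self hk x).symm]

theorem plantTrans_flipLast_self (hk : 0 < k) (x : Fin k → Bool) :
    plantTrans k p (flipLast x) x =
      if Even (k - ones (flipLast x)) then (p / (1 - p)) ^ (k - ones (flipLast x)) else 0 := by
  simp [plantTrans, flipLast_involutive x, (flipLast_ne_self hk x).symm]

end plantTrans

theorem plantPMF_eq_add {k : ℕ} (hk : 0 < k) (p : ℝ) (x : Fin k → Bool) :
    plantPMF k p x = (∏ i, bern p (x i)) * plantTrans k p x x +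
      (∏ i, bern p (flipLast x i)) * plantTrans k p (flipLast x) x := by
  refine Fintype.sum_eq_add _ _ (flipLast_ne_self hk x).symm fun z ⟨hzx, hzf⟩ => ?_
  have hfz : x ≠ flipLast z := fun h => hzf (by rw [h, flipLast_involutive z])
  rw [plantTrans_eq_zero p (Ne.symm hzx) hfz, mul_zero]

theorem plantPMF_eq {k : ℕ} (hk : 0 < k) {p : ℝ} (hp : p ≠ 1) (x : Fin k → Bool) :
    plantPMF k p x = p ^ ones x * (1 - p) ^ (k - ones x) - (-1) ^ (k - ones x) * p ^ k := by
  have hself := pow_mul_one_sub_pow_mul_div_pow hp (ones_le x)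
  have hflip := pow_mul_one_sub_pow_mul_div_pow hp (ones_le (flipLast x))
  rw [plantPMF_eq_add hk, plantTrans_self p hk, plantTrans_flipLast_self p hk, prod_bern, prod_bern]
  by_cases h : Even (k - ones x)
  · simp only [even_sub_ones_flipLast_iff hk, h, if_true, not_true_eq_false, if_false,
      h.neg_one_pow]
    linear_combination -hself
  · simp only [even_sub_ones_flipLast_iff hk, h, if_true, not_false_eq_true, if_false,
      (Nat.not_even_iff_odd.mp h).neg_one_pow]
    linear_combination hflip

theorem stmt7_general (k : ℕ) (hk : 2 ≤ k) (p : ℝ) (hp2 : p ≤ 1 / 2)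
    (π : Equiv.Perm (Fin k)) (x : Fin k → Bool) :
    plantPMF k p x = plantPMF k p (fun i => x (π i)) := by
  have hp : p ≠ 1 := by linarith
  rw [plantPMF_eq (by omega) hp, plantPMF_eq (by omega) hp, ones_comp_perm]

/-- The output distribution of the per-coordinate planting process is
exchangeable: for every permutation `π` of the `k` positions and every `x ∈ {0,1}^k`, the
probability of the output being `x` equals the probability of it being
`(x_{π(1)},…,x_{π(k)})`, despite the process only ever modifying the last bit. -/
theorem stmt7 (k : ℕ) (hk : 2 ≤ k) (p : ℝ) (hp0 : 0 < p) (hp2 : p ≤ 1 / 2)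
    (π : Equiv.Perm (Fin k)) (x : Fin k → Bool) :
    plantPMF k p x = plantPMF k p (fun i => x (π i)) :=
  stmt7_general k hk p hp2 π x
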